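/- arXiv:1502.06168 — 5 statements merged into one kernel-verified Lean document; each statement's English description precedes it below -/
import Mathlib

section
/- Let H be an interval supergraph of a finite graph G (i.e., V(H)=V(G) and E(G) ⊆ E(H)). Define φ(G,H) as the maximum over all W ⊆ V such that H[W] is a clique of the ratio β(G[W])/α(G[W]). Then β(G) ≤ 2·α(G)·φ(G,H)·(log₂(α(H)) + 1). -/
open SimpleGraph

/-- `s` is an independent set in `G`: pairwise nonadjacent vertices. -/
def SimpleGraph.IsIndepFinset {V : Type*} (G : SimpleGraph V) (s : Finset V) : Prop :=
  (s : Set V).Pairwise fun a b => ¬ G.Adj a b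

/-- The independence number `α(G)`: the largest size of an independent set. -/
noncomputable def indepNum {V : Type*} (G : SimpleGraph V) : ℕ :=
  sSup {n | ∃ s : Finset V, G.IsIndepFinset s ∧ s.card = n}

/-- `C` is a clique cover of `G`: a family of cliques covering every vertex. -/
def SimpleGraph.IsCliqueCover {V : Type*} (G : SimpleGraph V) (C : Finset (Finset V)) : Prop :=
  (∀ c ∈ C, G.IsClique (c : Set V)) ∧ ∀ v : V, ∃ c ∈ C, v ∈ c

/-- The clique cover number `β(G)`: minimum number of cliques covering `V(G)`. -/
noncomputable def cliqueCoverNum {V : Type*} (G : SimpleGraph V) : ℕ :=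
  sInf {n | ∃ C : Finset (Finset V), G.IsCliqueCover C ∧ C.card = n}

/-- `G` is an interval graph: the intersection graph of closed real intervals. -/
def IsIntervalGraph {V : Type*} (G : SimpleGraph V) : Prop :=
  ∃ a b : V → ℝ, ∀ u v : V, G.Adj u v ↔
    u ≠ v ∧ (Set.Icc (a u) (b u) ∩ Set.Icc (a v) (b v)).Nonempty

/-- `G` is perfect (stated via clique covers): `β = α` on every induced subgraph. -/
def IsPerfectGraph {V : Type*} (G : SimpleGraph V) : Prop :=
  ∀ W : Finset V, cliqueCoverNum (G.induce (W : Set V)) = _root_.indepNum (G.induce (W : Set V))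

/-- `φ(G,H)`: the maximum of `β(G[W])/α(G[W])` over subsets `W` inducing cliques in `H`. -/
noncomputable def phi {V : Type*} (G H : SimpleGraph V) : ℝ :=
  sSup {x : ℝ | ∃ W : Finset V, H.IsClique (W : Set V) ∧
    x = (cliqueCoverNum (G.induce (W : Set V)) : ℝ) / (_root_.indepNum (G.induce (W : Set V)) : ℝ)}

/-! Cut the line at a point `q`. The vertices whose interval contains `q` form a clique of `H`,
so `G` covers them by at most `φ · α(G)` cliques. The vertices whose intervals lie to the left of
`q` are not adjacent in `H ⊇ G` to those whose intervals lie to the right, so their independence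
numbers in `G` add up to at most `α(G)`. If `q` is chosen so that each side has at most half of
`α(H)`, recursing on both sides costs another `φ · α(G)` per level, and there are
`⌊log₂ α(H)⌋ + 1` levels. -/

namespace SimpleGraph

open Finset

variable {V : Type*} (G : SimpleGraph V)

noncomputable def indepNumOn (S : Finset V) : ℕ :=
  sSup {n | ∃ s ⊆ S, G.IsIndepFinset s ∧ s.card = n}

noncomputable def cliqueCoverNumOn (S : Finset V) : ℕ :=
  sInf {n | ∃ C : Finset (Finset V), (∀ c ∈ C, G.IsClique (c : Set V)) ∧
    (∀ v ∈ S, ∃ c ∈ C, v ∈ c) ∧ C.card = n}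

variable {G} {S T U : Finset V}

lemma isIndepFinset_singleton (v : V) : G.IsIndepFinset {v} := by
  simp [IsIndepFinset]

private lemma bddAbove_indepNumOn_set (S : Finset V) :
    BddAbove {n | ∃ s ⊆ S, G.IsIndepFinset s ∧ s.card = n} :=
  ⟨S.card, by rintro _ ⟨s, hs, -, rfl⟩; exact card_le_card hs⟩

lemma card_le_indepNumOn {s : Finset V} (hsS : s ⊆ S) (hs : G.IsIndepFinset s) :
    s.card ≤ G.indepNumOn S :=
  le_csSup (bddAbove_indepNumOn_set S) ⟨s, hsS, hs, rfl⟩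

lemma exists_isIndepFinset_card_eq_indepNumOn (S : Finset V) :
    ∃ s ⊆ S, G.IsIndepFinset s ∧ s.card = G.indepNumOn S :=
  Nat.sSup_mem (s := {n | ∃ s ⊆ S, G.IsIndepFinset s ∧ s.card = n})
    ⟨0, ∅, empty_subset S, by simp [IsIndepFinset], rfl⟩ (bddAbove_indepNumOn_set S)

lemma indepNumOn_le_card (S : Finset V) : G.indepNumOn S ≤ S.card := by
  obtain ⟨s, hsS, -, hs⟩ := G.exists_isIndepFinset_card_eq_indepNumOn S
  exact hs ▸ card_le_card hsS

lemma indepNumOn_pos (hS : S.Nonempty) : 0 < G.indepNumOn S := by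
  obtain ⟨v, hv⟩ := hS
  have := card_le_indepNumOn (singleton_subset_iff.2 hv) (G.isIndepFinset_singleton v)
  rwa [card_singleton] at this

lemma indepNumOn_mono (hST : S ⊆ T) : G.indepNumOn S ≤ G.indepNumOn T := by
  obtain ⟨s, hsS, hs, hcard⟩ := G.exists_isIndepFinset_card_eq_indepNumOn S
  exact hcard ▸ card_le_indepNumOn (hsS.trans hST) hs

lemma add_indepNumOn_le [DecidableEq V] (hST : Disjoint S T)
    (hadj : ∀ u ∈ S, ∀ v ∈ T, ¬ G.Adj u v) :
    G.indepNumOn S + G.indepNumOn T ≤ G.indepNumOn (S ∪ T) := by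
  obtain ⟨s, hsS, hs, hscard⟩ := G.exists_isIndepFinset_card_eq_indepNumOn S
  obtain ⟨t, htT, ht, htcard⟩ := G.exists_isIndepFinset_card_eq_indepNumOn T
  have hst : G.IsIndepFinset (s ∪ t) := by
    rw [IsIndepFinset, coe_union, Set.pairwise_union]
    exact ⟨hs, ht, fun u hu v hv _ =>
      ⟨hadj u (hsS hu) v (htT hv), fun h => hadj u (hsS hu) v (htT hv) h.symm⟩⟩
  rw [← hscard, ← htcard, ← card_union_of_disjoint (hST.mono hsS htT)]
  exact card_le_indepNumOn (union_subset_union hsS htT) hst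

lemma indepNumOn_univ [Fintype V] : G.indepNumOn univ = _root_.indepNum G := by
  simp [indepNumOn, _root_.indepNum]

lemma indepNum_induce_le_indepNumOn (W : Finset V) :
    _root_.indepNum (G.induce (W : Set V)) ≤ G.indepNumOn W := by
  refine csSup_le ⟨0, ∅, by simp [IsIndepFinset], rfl⟩ ?_
  rintro _ ⟨s, hs, rfl⟩
  rw [← card_map (Function.Embedding.subtype _)]
  refine card_le_indepNumOn (fun v hv => ?_) ?_
  · obtain ⟨w, -, rfl⟩ := mem_map.1 hv
    exact w.2
  · rw [IsIndepFinset, coe_map, Function.Embedding.coe_subtype,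
      Set.InjOn.pairwise_image Subtype.val_injective.injOn]
    exact hs

lemma one_le_indepNum [Fintype V] [Nonempty V] : 1 ≤ _root_.indepNum G := by
  obtain ⟨v⟩ := ‹Nonempty V›
  rw [← indepNumOn_univ]
  exact indepNumOn_pos ⟨v, mem_univ v⟩

lemma cliqueCoverNumOn_le_card_of_covers {C : Finset (Finset V)}
    (hC : ∀ c ∈ C, G.IsClique (c : Set V)) (hS : ∀ v ∈ S, ∃ c ∈ C, v ∈ c) :
    G.cliqueCoverNumOn S ≤ C.card :=
  Nat.sInf_le ⟨C, hC, hS, rfl⟩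

lemma cliqueCoverNumOn_empty : G.cliqueCoverNumOn ∅ = 0 :=
  Nat.le_zero.1 (cliqueCoverNumOn_le_card_of_covers (C := ∅) (by simp) (by simp))

lemma exists_cliqueCover_card_eq_cliqueCoverNumOn (S : Finset V) :
    ∃ C : Finset (Finset V), (∀ c ∈ C, G.IsClique (c : Set V)) ∧
      (∀ v ∈ S, ∃ c ∈ C, v ∈ c) ∧ C.card = G.cliqueCoverNumOn S := by
  refine Nat.sInf_mem (s := {n | ∃ C : Finset (Finset V),
    (∀ c ∈ C, G.IsClique (c : Set V)) ∧ (∀ v ∈ S, ∃ c ∈ C, v ∈ c) ∧ C.card = n})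
    ⟨_, S.map ⟨singleton, singleton_injective⟩, ?_, fun v hv => ?_, rfl⟩
  · simp
  · exact ⟨{v}, mem_map_of_mem _ hv, mem_singleton_self v⟩

lemma cliqueCoverNumOn_le_add [DecidableEq V] (hS : S ⊆ T ∪ U) :
    G.cliqueCoverNumOn S ≤ G.cliqueCoverNumOn T + G.cliqueCoverNumOn U := by
  obtain ⟨C, hC, hCT, hCcard⟩ := G.exists_cliqueCover_card_eq_cliqueCoverNumOn T
  obtain ⟨D, hD, hDU, hDcard⟩ := G.exists_cliqueCover_card_eq_cliqueCoverNumOn U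
  rw [← hCcard, ← hDcard]
  refine (cliqueCoverNumOn_le_card_of_covers (C := C ∪ D) ?_ fun v hv => ?_).trans
    (card_union_le C D)
  · simpa only [mem_union] using fun c hc => hc.elim (hC c) (hD c)
  · rcases mem_union.1 (hS hv) with hvT | hvU
    · obtain ⟨c, hc, hvc⟩ := hCT v hvT
      exact ⟨c, mem_union_left D hc, hvc⟩
    · obtain ⟨c, hc, hvc⟩ := hDU v hvU
      exact ⟨c, mem_union_right C hc, hvc⟩

lemma cliqueCoverNum_le_cliqueCoverNumOn_univ [Fintype V] :
    _root_.cliqueCoverNum G ≤ G.cliqueCoverNumOn univ := by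
  obtain ⟨C, hC, hCV, hCcard⟩ := G.exists_cliqueCover_card_eq_cliqueCoverNumOn univ
  exact hCcard ▸ Nat.sInf_le ⟨C, ⟨hC, fun v => hCV v (mem_univ v)⟩, rfl⟩

lemma cliqueCoverNumOn_le_cliqueCoverNum_induce (W : Finset V) :
    G.cliqueCoverNumOn W ≤ _root_.cliqueCoverNum (G.induce (W : Set V)) := by
  let val : Finset (W : Set V) ↪ Finset V :=
    (mapEmbedding (Function.Embedding.subtype _)).toEmbedding
  have hcover :
      (G.induce (W : Set V)).IsCliqueCover (univ.map ⟨singleton, singleton_injective⟩) := by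
    refine ⟨fun c hc => ?_, fun v =>
      ⟨{v}, mem_map_of_mem _ (mem_univ v), mem_singleton_self v⟩⟩
    obtain ⟨v, -, rfl⟩ := mem_map.1 hc
    simp only [Function.Embedding.coeFn_mk, coe_singleton, isClique_singleton]
  obtain ⟨D, ⟨hD, hDW⟩, hDcard⟩ := Nat.sInf_mem
    (s := {n | ∃ C : Finset (Finset (W : Set V)), (G.induce (W : Set V)).IsCliqueCover C ∧
      C.card = n}) ⟨_, _, hcover, rfl⟩
  calc G.cliqueCoverNumOn W ≤ (D.map val).card := by
        refine cliqueCoverNumOn_le_card_of_covers (fun c hc => ?_) fun v hv => ?_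
        · obtain ⟨c, hcD, rfl⟩ := mem_map.1 hc
          rw [RelEmbedding.coe_toEmbedding, mapEmbedding_apply, IsClique, coe_map,
            Function.Embedding.coe_subtype, Set.InjOn.pairwise_image Subtype.val_injective.injOn]
          exact hD c hcD
        · obtain ⟨c, hc, hvc⟩ := hDW ⟨v, hv⟩
          exact ⟨val c, mem_map_of_mem val hc, mem_map_of_mem _ hvc⟩
    _ = _root_.cliqueCoverNum (G.induce (W : Set V)) := (card_map val).trans hDcard

end SimpleGraph

section Phi

variable {V : Type*} [Fintype V] {G H : SimpleGraph V}

private lemma bddAbove_phi_set :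
    BddAbove {x : ℝ | ∃ W : Finset V, H.IsClique (W : Set V) ∧
      x = (cliqueCoverNum (G.induce (W : Set V)) : ℝ) /
        (_root_.indepNum (G.induce (W : Set V)) : ℝ)} :=
  (Set.finite_range fun W : Finset V => (cliqueCoverNum (G.induce (W : Set V)) : ℝ) /
    (_root_.indepNum (G.induce (W : Set V)) : ℝ)).bddAbove.mono <| by
    rintro _ ⟨W, -, rfl⟩
    exact ⟨W, rfl⟩

lemma div_le_phi {W : Finset V} (hW : H.IsClique (W : Set V)) :
    (cliqueCoverNum (G.induce (W : Set V)) : ℝ) /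
      (_root_.indepNum (G.induce (W : Set V)) : ℝ) ≤ phi G H :=
  le_csSup bddAbove_phi_set ⟨W, hW, rfl⟩

lemma phi_nonneg : 0 ≤ phi G H :=
  (by positivity : (0 : ℝ) ≤ _).trans (div_le_phi (W := ∅) (by simp))

lemma cliqueCoverNumOn_le_phi_mul {W : Finset V} (hW : H.IsClique (W : Set V)) :
    (G.cliqueCoverNumOn W : ℝ) ≤ phi G H * G.indepNumOn W := by
  rcases W.eq_empty_or_nonempty with rfl | ⟨v, hv⟩
  · simpa [cliqueCoverNumOn_empty] using mul_nonneg phi_nonneg (Nat.cast_nonneg _)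
  have : Nonempty (W : Set V) := ⟨⟨v, hv⟩⟩
  have hα : (0 : ℝ) < _root_.indepNum (G.induce (W : Set V)) := by
    exact_mod_cast (G.induce (W : Set V)).one_le_indepNum
  calc (G.cliqueCoverNumOn W : ℝ) ≤ cliqueCoverNum (G.induce (W : Set V)) := by
        exact_mod_cast G.cliqueCoverNumOn_le_cliqueCoverNum_induce W
    _ = (cliqueCoverNum (G.induce (W : Set V)) : ℝ) /
          (_root_.indepNum (G.induce (W : Set V)) : ℝ) * _root_.indepNum (G.induce (W : Set V)) :=
        (div_mul_cancel₀ _ hα.ne').symm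
    _ ≤ phi G H * G.indepNumOn W := by
        gcongr
        · exact phi_nonneg
        · exact div_le_phi hW
        · exact G.indepNum_induce_le_indepNumOn W

end Phi

lemma Nat.size_div_two_add_one {n : ℕ} (hn : n ≠ 0) : (n / 2).size + 1 = n.size := by
  refine le_antisymm (Nat.lt_size.2 ?_) (Nat.size_le.2 ?_)
  · rcases Nat.eq_zero_or_pos (n / 2).size with h | h
    · rw [h]
      omega
    · have := Nat.lt_size.1 (Nat.sub_one_lt_of_lt h)
      rw [← Nat.sub_one_add_one h.ne', pow_succ]
      omega
  · have := Nat.lt_size_self (n / 2)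
    rw [pow_succ]
    omega

lemma Nat.size_le_logb_add_one (n : ℕ) : (n.size : ℝ) ≤ Real.logb 2 n + 1 := by
  have hsize : n.size ≤ Nat.log 2 n + 1 := Nat.size_le.2 (Nat.lt_pow_succ_log_self one_lt_two n)
  calc (n.size : ℝ) ≤ (Nat.log 2 n : ℝ) + 1 := by exact_mod_cast hsize
    _ ≤ Real.logb 2 n + 1 := by simpa using Real.natLog_le_logb n 2

open Set in
def IsIntervalModel {V : Type*} (H : SimpleGraph V) (a b : V → ℝ) : Prop :=
  ∀ u v : V, H.Adj u v ↔ u ≠ v ∧ (Icc (a u) (b u) ∩ Icc (a v) (b v)).Nonempty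

open Set in
/-- Empty intervals belong to isolated vertices; they are replaced by distinct points to the
right of all other intervals. -/
theorem IsIntervalGraph.exists_isIntervalModel {V : Type*} [Fintype V] {H : SimpleGraph V}
    (hH : IsIntervalGraph H) :
    ∃ a b : V → ℝ, IsIntervalModel H a b ∧ ∀ v, a v ≤ b v := by
  classical
  obtain ⟨a, b, hab⟩ := hH
  let M : ℝ := ∑ v, |b v| + 1
  have hbM : ∀ v, b v < M := fun v =>
    (le_abs_self (b v)).trans_lt (by
      linarith [Finset.single_le_sum (fun w _ => abs_nonneg (b w)) (Finset.mem_univ v)])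
  let e : V → ℝ := fun v => M + Fintype.equivFin V v
  have hMe : ∀ v, M ≤ e v := fun v => le_add_of_nonneg_right (Nat.cast_nonneg _)
  have he : ∀ u v, e u = e v → u = v := fun u v h => by
    simpa [e, Fin.val_inj] using h
  refine ⟨fun v => if a v ≤ b v then a v else e v, fun v => if a v ≤ b v then b v else e v,
    fun u v => ?_, fun v => by beta_reduce; split_ifs with h <;> simp [h]⟩
  rw [hab]
  refine and_congr_right fun huv => ?_
  beta_reduce
  split_ifs with hu hv hv
  · rfl
  · simp only [Icc_eq_empty hv, inter_empty, Set.not_nonempty_empty, Icc_self,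
      inter_singleton_nonempty, mem_Icc, false_iff, not_and, not_le]
    exact fun _ => (hbM u).trans_le (hMe v)
  · simp only [Icc_eq_empty hu, empty_inter, Set.not_nonempty_empty, Icc_self,
      singleton_inter_nonempty, mem_Icc, false_iff, not_and, not_le]
    exact fun _ => (hbM v).trans_le (hMe u)
  · simp only [Icc_eq_empty hu, Icc_eq_empty hv, inter_self, Set.not_nonempty_empty, Icc_self,
      inter_singleton_nonempty, mem_singleton_iff, false_iff]
    exact fun h => huv (he v u h).symm

namespace IsIntervalModel

open Finset

variable {V : Type*} {G H : SimpleGraph V} {a b : V → ℝ}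

lemma not_adj_of_lt (hM : IsIntervalModel H a b) {u v : V} (h : b u < a v) : ¬ H.Adj u v := by
  rintro huv
  obtain ⟨-, x, hxu, hxv⟩ := (hM u v).1 huv
  linarith [hxu.2, hxv.1]

lemma isClique_filter_mem_Icc (hM : IsIntervalModel H a b) (S : Finset V) (p : ℝ) :
    H.IsClique (S.filter fun v => p ∈ Set.Icc (a v) (b v) : Set V) := by
  intro u hu v hv huv
  exact (hM u v).2 ⟨huv, p, (mem_filter.1 hu).2, (mem_filter.1 hv).2⟩

/-- `q` is the least right endpoint such that the intervals of `S` ending by `q` have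
independence number above half of `α_H(S)`. Joining an independent set of those with one lying
right of `q` shows that the right side has at most the remaining half. -/
lemma exists_indepNumOn_filter_le_half (hM : IsIntervalModel H a b) (hne : ∀ v, a v ≤ b v)
    {S : Finset V} (hS : S.Nonempty) : ∃ q : ℝ,
      H.indepNumOn (S.filter (b · < q)) ≤ H.indepNumOn S / 2 ∧
      H.indepNumOn (S.filter (q < a ·)) ≤ H.indepNumOn S / 2 := by
  classical
  set k := H.indepNumOn S
  have hP : (S.filter fun v => k / 2 < H.indepNumOn (S.filter (b · ≤ b v))).Nonempty := by
    obtain ⟨w, hw, hmax⟩ := S.exists_max_image b hS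
    refine ⟨w, mem_filter.2 ⟨hw, ?_⟩⟩
    rw [filter_true_of_mem hmax]
    exact Nat.div_lt_self (indepNumOn_pos hS) one_lt_two
  obtain ⟨v, hv, hmin⟩ := exists_min_image _ b hP
  obtain ⟨-, hvk⟩ := mem_filter.1 hv
  refine ⟨b v, ?_, ?_⟩
  · rcases (S.filter (b · < b v)).eq_empty_or_nonempty with hL | hL
    · exact hL ▸ (H.indepNumOn_le_card ∅).trans (by simp)
    obtain ⟨u, hu, humax⟩ := exists_max_image _ b hL
    obtain ⟨huS, huv⟩ := mem_filter.1 hu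
    calc H.indepNumOn (S.filter (b · < b v)) ≤ H.indepNumOn (S.filter (b · ≤ b u)) :=
          indepNumOn_mono fun x hx => mem_filter.2 ⟨(mem_filter.1 hx).1, humax x hx⟩
      _ ≤ k / 2 := not_lt.1 fun h => not_lt.2 (hmin u (mem_filter.2 ⟨huS, h⟩)) huv
  · have hsep := add_indepNumOn_le (G := H) (S := S.filter (b v < a ·))
      (T := S.filter (b · ≤ b v)) (disjoint_filter.2 fun x _ h h' => by linarith [hne x])
      fun x hx y hy => hM.not_adj_of_lt ((mem_filter.1 hy).2.trans_lt (mem_filter.1 hx).2) ∘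
        Adj.symm
    have := indepNumOn_mono (G := H) (T := S)
      (union_subset (filter_subset (b v < a ·) S) (filter_subset (b · ≤ b v) S))
    omega

theorem cliqueCoverNumOn_le [Fintype V] (hle : G ≤ H) (hM : IsIntervalModel H a b)
    (hne : ∀ v, a v ≤ b v) (S : Finset V) :
    (G.cliqueCoverNumOn S : ℝ) ≤ phi G H * G.indepNumOn S * (H.indepNumOn S).size := by
  classical
  induction hk : H.indepNumOn S using Nat.strong_induction_on generalizing S with
  | _ k ih =>
  rcases S.eq_empty_or_nonempty with rfl | hS
  · simpa [cliqueCoverNumOn_empty] using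
      mul_nonneg (mul_nonneg phi_nonneg (Nat.cast_nonneg _)) (Nat.cast_nonneg _)
  obtain ⟨q, hLk, hRk⟩ := hM.exists_indepNumOn_filter_le_half hne hS
  set L := S.filter (b · < q)
  set R := S.filter (q < a ·)
  set W := S.filter fun v => q ∈ Set.Icc (a v) (b v)
  have hk0 : 0 < k := hk ▸ indepNumOn_pos hS
  have hcover : S ⊆ (L ∪ R) ∪ W := fun v hv => by
    simp only [L, R, W, mem_union, mem_filter, Set.mem_Icc, hv, true_and]
    by_contra! h
    linarith [h.2 h.1.2, h.1.1]
  have hLR : G.indepNumOn L + G.indepNumOn R ≤ G.indepNumOn S :=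
    (add_indepNumOn_le (disjoint_filter.2 fun v _ h h' => by linarith [hne v])
      fun u hu v hv huv => hM.not_adj_of_lt ((mem_filter.1 hu).2.trans (mem_filter.1 hv).2)
        (hle huv)).trans (indepNumOn_mono (union_subset (filter_subset _ S) (filter_subset _ S)))
  have hW : G.indepNumOn W ≤ G.indepNumOn S := indepNumOn_mono (filter_subset _ S)
  have hhalf : k / 2 < k := Nat.div_lt_self hk0 one_lt_two
  have hφ : 0 ≤ phi G H := phi_nonneg
  set s := (k / 2).size
  have hsizeL : ((H.indepNumOn L).size : ℝ) ≤ s := by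
    exact_mod_cast Nat.size_le_size (hk ▸ hLk)
  have hsizeR : ((H.indepNumOn R).size : ℝ) ≤ s := by
    exact_mod_cast Nat.size_le_size (hk ▸ hRk)
  have hBL := (ih _ (hk ▸ hLk |>.trans_lt hhalf) L rfl).trans
    (mul_le_mul_of_nonneg_left hsizeL (mul_nonneg hφ (Nat.cast_nonneg _)))
  have hBR := (ih _ (hk ▸ hRk |>.trans_lt hhalf) R rfl).trans
    (mul_le_mul_of_nonneg_left hsizeR (mul_nonneg hφ (Nat.cast_nonneg _)))
  have hBW := cliqueCoverNumOn_le_phi_mul (G := G) (hM.isClique_filter_mem_Icc S q)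
  have hB : (G.cliqueCoverNumOn S : ℝ) ≤
      G.cliqueCoverNumOn L + G.cliqueCoverNumOn R + G.cliqueCoverNumOn W := by
    exact_mod_cast (cliqueCoverNumOn_le_add hcover).trans
      (Nat.add_le_add_right (cliqueCoverNumOn_le_add subset_rfl) _)
  have hLR' : phi G H * s * (G.indepNumOn L + G.indepNumOn R : ℝ) ≤
      phi G H * s * G.indepNumOn S :=
    mul_le_mul_of_nonneg_left (by exact_mod_cast hLR) (by positivity)
  have hW' : phi G H * G.indepNumOn W ≤ phi G H * G.indepNumOn S :=
    mul_le_mul_of_nonneg_left (by exact_mod_cast hW) hφ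
  rw [← Nat.size_div_two_add_one hk0.ne', Nat.cast_add_one]
  linarith

end IsIntervalModel

theorem clique_cover_bound_interval_supergraph {V : Type*} [Fintype V]
    (G H : SimpleGraph V) (hle : G ≤ H) (hH : IsIntervalGraph H) :
    (cliqueCoverNum G : ℝ) ≤
      2 * (_root_.indepNum G : ℝ) * phi G H * (Real.logb 2 (_root_.indepNum H : ℝ) + 1) := by
  obtain ⟨a, b, hM, hne⟩ := hH.exists_isIntervalModel
  have hlog := Nat.size_le_logb_add_one (_root_.indepNum H)
  have hφα : 0 ≤ phi G H * _root_.indepNum G := mul_nonneg phi_nonneg (Nat.cast_nonneg _)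
  have hbound :
      (cliqueCoverNum G : ℝ) ≤ phi G H * _root_.indepNum G * (_root_.indepNum H).size := by
    rw [← G.indepNumOn_univ, ← H.indepNumOn_univ]
    exact (Nat.cast_le.2 G.cliqueCoverNum_le_cliqueCoverNumOn_univ).trans
      (hM.cliqueCoverNumOn_le hle hne Finset.univ)
  have hprod : 0 ≤ phi G H * _root_.indepNum G * (Real.logb 2 (_root_.indepNum H) + 1) :=
    mul_nonneg hφα ((Nat.cast_nonneg _).trans hlog)
  calc (cliqueCoverNum G : ℝ)
      ≤ phi G H * _root_.indepNum G * (Real.logb 2 (_root_.indepNum H) + 1) :=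
        hbound.trans (mul_le_mul_of_nonneg_left hlog hφα)
    _ ≤ 2 * (_root_.indepNum G : ℝ) * phi G H * (Real.logb 2 (_root_.indepNum H : ℝ) + 1) :=
        by linarith
end

section
/- Let G be a graph with E(G) = E(H₁) ∩ E(H₂), where H₁ is an interval supergraph of G and H₂ is a perfect supergraph of G (all on the same vertex set). Then for every W ⊆ V(G) such that H₁[W] is a clique, β(G[W]) = α(G[W]); equivalently, φ(G,H₁) = 1. -/
open SimpleGraph

/-! Inside a clique `W` of `H₁` every pair is `H₁`-adjacent, so `G[W] = (H₁ ⊓ H₂)[W] = H₂[W]` and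
perfectness of `H₂` gives `β(G[W]) = α(G[W])`. Every ratio in `φ(G,H₁)` is therefore at most `1`,
and a single vertex attains it. -/

lemma one_le_indepNum {V : Type*} [Finite V] [Nonempty V] (G : SimpleGraph V) :
    1 ≤ _root_.indepNum G := by
  have := Fintype.ofFinite V
  obtain ⟨v⟩ := ‹Nonempty V›
  refine le_csSup ⟨Fintype.card V, ?_⟩ ⟨{v}, ?_, Finset.card_singleton v⟩
  · rintro n ⟨s, -, rfl⟩
    exact s.card_le_univ
  · simp [SimpleGraph.IsIndepFinset]

lemma SimpleGraph.induce_inf_eq_of_isClique {V : Type*} (H₁ H₂ : SimpleGraph V) {W : Set V}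
    (hW : H₁.IsClique W) : (H₁ ⊓ H₂).induce W = H₂.induce W := by
  ext u v
  simp only [comap_adj, inf_adj, Function.Embedding.subtype_apply, and_iff_right_iff_imp]
  exact fun h => hW u.2 v.2 h.ne

lemma phi_eq_one_of_forall_isClique {V : Type*} [Nonempty V] (G H : SimpleGraph V)
    (h : ∀ W : Finset V, H.IsClique (W : Set V) →
      cliqueCoverNum (G.induce (W : Set V)) = _root_.indepNum (G.induce (W : Set V))) :
    phi G H = 1 := by
  obtain ⟨v⟩ := ‹Nonempty V›
  refine IsGreatest.csSup_eq ⟨⟨{v}, by simp, ?_⟩, ?_⟩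
  · have hW : H.IsClique (({v} : Finset V) : Set V) := by simp
    have : Nonempty (({v} : Finset V) : Set V) := ⟨⟨v, by simp⟩⟩
    have hα : _root_.indepNum (G.induce (({v} : Finset V) : Set V)) ≠ 0 :=
      Nat.one_le_iff_ne_zero.mp (one_le_indepNum _)
    rw [h {v} hW, div_self (Nat.cast_ne_zero.mpr hα)]
  · rintro x ⟨W, hW, rfl⟩
    rw [h W hW]
    -- covers `α = 0` too, where the ratio is the junk value `0 / 0 = 0`
    exact div_self_le_one _

theorem phi_eq_one_of_perfect_factor_general {V : Type*} [Nonempty V]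
    (G H₁ H₂ : SimpleGraph V) (hG : G = H₁ ⊓ H₂)
    (h₂ : IsPerfectGraph H₂) :
    (∀ W : Finset V, H₁.IsClique (W : Set V) →
      cliqueCoverNum (G.induce (W : Set V)) = _root_.indepNum (G.induce (W : Set V))) ∧
    phi G H₁ = 1 := by
  have hβα : ∀ W : Finset V, H₁.IsClique (W : Set V) →
      cliqueCoverNum (G.induce (W : Set V)) = _root_.indepNum (G.induce (W : Set V)) := by
    intro W hW
    rw [hG, H₁.induce_inf_eq_of_isClique H₂ hW]
    exact h₂ W
  exact ⟨hβα, phi_eq_one_of_forall_isClique G H₁ hβα⟩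

theorem phi_eq_one_of_perfect_factor {V : Type*} [Fintype V] [Nonempty V]
    (G H₁ H₂ : SimpleGraph V) (hG : G = H₁ ⊓ H₂)
    (h₁ : IsIntervalGraph H₁) (h₂ : IsPerfectGraph H₂) :
    (∀ W : Finset V, H₁.IsClique (W : Set V) →
      cliqueCoverNum (G.induce (W : Set V)) = _root_.indepNum (G.induce (W : Set V))) ∧
    phi G H₁ = 1 :=
  phi_eq_one_of_perfect_factor_general G H₁ H₂ hG h₂
end

section
/- Let G be the intersection graph of a finite family of axis-parallel rectangles in the plane. Then β(G) ≤ 2·α(G)·(log₂(α(G)) + 1). -/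
open SimpleGraph

/-!
Split the family by a vertical line `x = t`. The rectangles meeting the line form an interval
graph in the `y`-coordinate, which the greedy argument covers by at most `α` cliques. Choosing
`t` as the least value for which some `⌈α/2⌉` pairwise disjoint rectangles lie (weakly) left of
the line, the rectangles strictly to the left have fewer than `⌈α/2⌉` pairwise disjoint members,
and those strictly to the right at most `⌊α/2⌋`, since they are disjoint from the chosen ones.
Recursing on both sides gives `β ≤ α (⌈log₂ α⌉ + 1)`, and `⌈log₂ α⌉ < log₂ α + 1`.
-/

namespace SimpleGraph

variable {V : Type*} (G : SimpleGraph V)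

def IndepBounded (S : Finset V) (k : ℕ) : Prop :=
  ∀ s ⊆ S, G.IsIndepFinset s → s.card ≤ k

def CliqueCoverable (S : Finset V) (k : ℕ) : Prop :=
  ∃ C : Finset (Finset V), (∀ c ∈ C, G.IsClique (c : Set V)) ∧ (∀ v ∈ S, ∃ c ∈ C, v ∈ c) ∧
    C.card ≤ k

variable {G} {S T : Finset V} {k l : ℕ}

theorem IsIndepFinset.mono {s t : Finset V} (ht : G.IsIndepFinset t) (hst : s ⊆ t) :
    G.IsIndepFinset s :=
  Set.Pairwise.mono (Finset.coe_subset.mpr hst) ht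

theorem IndepBounded.mono (h : G.IndepBounded S k) (hTS : T ⊆ S) : G.IndepBounded T k :=
  fun s hsT hs => h s (hsT.trans hTS) hs

theorem IndepBounded.eq_empty (h : G.IndepBounded S 0) : S = ∅ := by
  by_contra hS
  obtain ⟨v, hv⟩ := Finset.nonempty_iff_ne_empty.mpr hS
  have := h {v} (Finset.singleton_subset_iff.mpr hv) (by simp [IsIndepFinset])
  simp at this

theorem indepBounded_pred_or_exists (G : SimpleGraph V) (S : Finset V) (m : ℕ) :
    G.IndepBounded S (m - 1) ∨ ∃ s ⊆ S, G.IsIndepFinset s ∧ s.card = m := by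
  refine or_iff_not_imp_right.mpr fun hm s hsS hs => ?_
  by_contra! hcard
  obtain ⟨s', hs's, hs'card⟩ := Finset.exists_subset_card_eq (show m ≤ s.card by omega)
  exact hm ⟨s', hs's.trans hsS, hs.mono hs's, hs'card⟩

theorem IndepBounded.of_not_adj (h : G.IndepBounded S k) {s₀ : Finset V} (hs₀S : s₀ ⊆ S)
    (hs₀ : G.IsIndepFinset s₀) (hTS : T ⊆ S) (hdisj : Disjoint s₀ T)
    (hnadj : ∀ x ∈ s₀, ∀ y ∈ T, ¬ G.Adj x y) : G.IndepBounded T (k - s₀.card) := by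
  classical
  intro s hsT hs
  have hunion : G.IsIndepFinset (s₀ ∪ s) := by
    rw [IsIndepFinset, Finset.coe_union, Set.pairwise_union]
    exact ⟨hs₀, hs, fun x hx y hy _ =>
      ⟨hnadj x hx y (hsT hy), fun hyx => hnadj x hx y (hsT hy) hyx.symm⟩⟩
  have := h _ (Finset.union_subset hs₀S (hsT.trans hTS)) hunion
  rw [Finset.card_union_of_disjoint (hdisj.mono_right hsT)] at this
  omega

theorem CliqueCoverable.mono (h : G.CliqueCoverable S k) (hTS : T ⊆ S) (hkl : k ≤ l) :
    G.CliqueCoverable T l :=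
  let ⟨C, hC, hcov, hcard⟩ := h
  ⟨C, hC, fun v hv => hcov v (hTS hv), hcard.trans hkl⟩

theorem CliqueCoverable.union [DecidableEq V] (hS : G.CliqueCoverable S k)
    (hT : G.CliqueCoverable T l) : G.CliqueCoverable (S ∪ T) (k + l) := by
  obtain ⟨C, hC, hCcov, hCcard⟩ := hS
  obtain ⟨D, hD, hDcov, hDcard⟩ := hT
  refine ⟨C ∪ D, ?_, ?_, (Finset.card_union_le C D).trans (add_le_add hCcard hDcard)⟩
  · intro c hc
    rcases Finset.mem_union.mp hc with hc | hc
    exacts [hC c hc, hD c hc]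
  · intro v hv
    rcases Finset.mem_union.mp hv with hv | hv
    · obtain ⟨c, hc, hvc⟩ := hCcov v hv
      exact ⟨c, Finset.mem_union_left D hc, hvc⟩
    · obtain ⟨c, hc, hvc⟩ := hDcov v hv
      exact ⟨c, Finset.mem_union_right C hc, hvc⟩

theorem cliqueCoverable_of_isClique (hS : G.IsClique (S : Set V)) : G.CliqueCoverable S 1 :=
  ⟨{S}, by simpa using hS, fun v hv => ⟨S, Finset.mem_singleton_self S, hv⟩, by simp⟩

theorem cliqueCoverable_card (G : SimpleGraph V) (S : Finset V) : G.CliqueCoverable S S.card := by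
  classical
  refine ⟨S.image ({·}), ?_, fun v hv => ⟨{v}, Finset.mem_image_of_mem _ hv, by simp⟩,
    Finset.card_image_le⟩
  intro c hc
  obtain ⟨v, -, rfl⟩ := Finset.mem_image.mp hc
  simp

theorem card_le_indepNum [Fintype V] {s : Finset V} (hs : G.IsIndepFinset s) :
    s.card ≤ _root_.indepNum G :=
  le_csSup ⟨Fintype.card V, by rintro _ ⟨t, -, rfl⟩; exact Finset.card_le_univ t⟩ ⟨s, hs, rfl⟩

theorem indepBounded_indepNum [Fintype V] (S : Finset V) :
    G.IndepBounded S (_root_.indepNum G) :=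
  fun _ _ hs => card_le_indepNum hs

theorem cliqueCoverNum_le [Fintype V] (h : G.CliqueCoverable Finset.univ k) :
    cliqueCoverNum G ≤ k := by
  obtain ⟨C, hC, hcov, hcard⟩ := h
  have hcover : G.IsCliqueCover C := ⟨hC, fun v => hcov v (Finset.mem_univ v)⟩
  exact (Nat.sInf_le ⟨C, hcover, rfl⟩ : cliqueCoverNum G ≤ C.card).trans hcard

/-- Greedy: the interval with the leftmost right end `q u` and all intervals starting before
`q u` share the point `q u`; the remaining intervals miss the interval of `u`. -/
theorem cliqueCoverable_of_intervals {α : Type*} [LinearOrder α] (p q : V → α)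
    (hpq : ∀ v ∈ S, p v ≤ q v)
    (hadj : ∀ u ∈ S, ∀ v ∈ S,
      G.Adj u v ↔ u ≠ v ∧ (Set.Icc (p u) (q u) ∩ Set.Icc (p v) (q v)).Nonempty)
    (hk : G.IndepBounded S k) : G.CliqueCoverable S k := by
  classical
  induction S using Finset.strongInduction generalizing k with
  | H S ih =>
  rcases S.eq_empty_or_nonempty with rfl | hS
  · exact (cliqueCoverable_card G ∅).mono subset_rfl (by simp)
  obtain ⟨u, huS, hu⟩ := S.exists_min_image q hS
  set T := S.filter (p · ≤ q u)
  set S' := S.filter (q u < p ·)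
  have hT : G.IsClique (T : Set V) := by
    intro x hx y hy hxy
    simp only [T, Finset.mem_coe, Finset.mem_filter] at hx hy
    exact (hadj x hx.1 y hy.1).mpr ⟨hxy, q u, ⟨hx.2, hu x hx.1⟩, ⟨hy.2, hu y hy.1⟩⟩
  have hS' : S' ⊂ S := Finset.filter_ssubset.mpr ⟨u, huS, not_lt.mpr (hpq u huS)⟩
  have hnadj : ∀ x ∈ ({u} : Finset V), ∀ y ∈ S', ¬ G.Adj x y := by
    intro x hx y hy hxy
    rw [Finset.mem_singleton.mp hx] at hxy
    obtain ⟨-, z, hzu, hzy⟩ := (hadj u huS y (Finset.mem_filter.mp hy).1).mp hxy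
    exact (Finset.mem_filter.mp hy).2.not_ge (hzy.1.trans hzu.2)
  have hk' : G.IndepBounded S' (k - 1) :=
    hk.of_not_adj (Finset.singleton_subset_iff.mpr huS) (by simp [IsIndepFinset])
      (Finset.filter_subset _ S) (by simp [S', hpq u huS]) hnadj
  have hk1 : 1 ≤ k := hk {u} (Finset.singleton_subset_iff.mpr huS) (by simp [IsIndepFinset])
  have hcover : S ⊆ T ∪ S' := fun v hv => by
    rcases le_or_gt (p v) (q u) with h | h
    · exact Finset.mem_union_left _ (Finset.mem_filter.mpr ⟨hv, h⟩)
    · exact Finset.mem_union_right _ (Finset.mem_filter.mpr ⟨hv, h⟩)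
  exact ((cliqueCoverable_of_isClique hT).union
    (ih S' hS' (fun v hv => hpq v (Finset.filter_subset _ S hv))
      (fun x hx y hy => hadj x (Finset.filter_subset _ S hx) y (Finset.filter_subset _ S hy))
      hk')).mono hcover (by omega)

/-- `t` is the least value of `max b` over independent `m`-subsets of `S`. -/
theorem exists_threshold {α : Type*} [LinearOrder α] (b : V → α) {m : ℕ} (hm : 0 < m)
    (hS : ∃ s ⊆ S, G.IsIndepFinset s ∧ s.card = m) :
    ∃ t : α, ∃ s₀ ⊆ S, G.IsIndepFinset s₀ ∧ s₀.card = m ∧ (∀ x ∈ s₀, b x ≤ t) ∧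
      G.IndepBounded (S.filter (b · < t)) (m - 1) := by
  classical
  set B := S.filter fun v => ∃ s ⊆ S, G.IsIndepFinset s ∧ s.card = m ∧ ∀ x ∈ s, b x ≤ b v
  have hB : ∀ s ⊆ S, G.IsIndepFinset s → s.card = m → ∃ v ∈ s, v ∈ B := by
    intro s hsS hs hcard
    obtain ⟨v, hv, hmax⟩ := s.exists_max_image b (Finset.card_pos.mp (hcard ▸ hm))
    exact ⟨v, hv, Finset.mem_filter.mpr ⟨hsS hv, s, hsS, hs, hcard, hmax⟩⟩
  obtain ⟨s, hsS, hs, hcard⟩ := hS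
  obtain ⟨v, -, hvB⟩ := hB s hsS hs hcard
  obtain ⟨u, huB, hu⟩ := B.exists_min_image b ⟨_, hvB⟩
  obtain ⟨-, s₀, hs₀S, hs₀, hs₀card, hs₀b⟩ := Finset.mem_filter.mp huB
  refine ⟨b u, s₀, hs₀S, hs₀, hs₀card, hs₀b, ?_⟩
  refine (indepBounded_pred_or_exists G _ m).resolve_right ?_
  rintro ⟨s', hs'L, hs', hs'card⟩
  obtain ⟨v, hv, hvB⟩ := hB s' (hs'L.trans (Finset.filter_subset _ S)) hs' hs'card
  exact (Finset.mem_filter.mp (hs'L hv)).2.not_ge (hu v hvB)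

end SimpleGraph

def cliqueCoverBound (k : ℕ) : ℕ := k * (Nat.clog 2 k + 1)

theorem cliqueCoverBound_mono : Monotone cliqueCoverBound := fun _ _ h =>
  Nat.mul_le_mul h (Nat.add_le_add_right (Nat.clog_mono_right 2 h) 1)

theorem cliqueCoverBound_add_le (j e : ℕ) :
    cliqueCoverBound j + e ≤ cliqueCoverBound (j + e) := by
  have := Nat.clog_mono_right 2 (Nat.le_add_right j e)
  unfold cliqueCoverBound
  nlinarith

/-- Halving `k` lowers `⌈log₂ k⌉` by one, which pays for the `k` cliques of the middle part. -/
theorem cliqueCoverBound_halves_add_le (k : ℕ) :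
    cliqueCoverBound ((k - 1) / 2) + cliqueCoverBound (k / 2) + k ≤ cliqueCoverBound k := by
  rcases lt_or_ge k 2 with hk | hk
  · interval_cases k <;> simp [cliqueCoverBound]
  have hclog : Nat.clog 2 k = Nat.clog 2 ((k + 1) / 2) + 1 := Nat.clog_of_two_le one_lt_two hk
  have h₁ := Nat.clog_mono_right 2 (show (k - 1) / 2 ≤ (k + 1) / 2 by omega)
  have h₂ := Nat.clog_mono_right 2 (show k / 2 ≤ (k + 1) / 2 by omega)
  have hsum : (k - 1) / 2 + k / 2 = k - 1 := by omega
  unfold cliqueCoverBound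
  rw [hclog]
  set X := Nat.clog 2 ((k + 1) / 2)
  calc (k - 1) / 2 * (Nat.clog 2 ((k - 1) / 2) + 1) + k / 2 * (Nat.clog 2 (k / 2) + 1) + k
      ≤ (k - 1) / 2 * (X + 1) + k / 2 * (X + 1) + k := by gcongr
    _ = (k - 1) * (X + 1) + k := by rw [← add_mul, hsum]
    _ ≤ k * (X + 1 + 1) := by
        have := Nat.mul_le_mul_right (X + 1) (Nat.sub_le k 1)
        nlinarith

theorem cliqueCoverBound_le (k : ℕ) :
    (cliqueCoverBound k : ℝ) ≤ 2 * k * (Real.logb 2 k + 1) := by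
  have hlog : 0 ≤ Real.logb 2 k :=
    div_nonneg (Real.log_natCast_nonneg k) (Real.log_nonneg one_le_two)
  have hclog : (Nat.clog 2 k : ℝ) < Real.logb 2 k + 1 := by
    rw [← Real.natCeil_logb_natCast]
    exact_mod_cast Nat.ceil_lt_add_one hlog
  have hk : (0 : ℝ) ≤ k := k.cast_nonneg
  unfold cliqueCoverBound
  push_cast
  nlinarith

namespace SimpleGraph

variable {V : Type*}

def IsRectangleIntersectionGraph (G : SimpleGraph V) (a b c d : V → ℝ) : Prop :=
  ∀ u v : V, G.Adj u v ↔ u ≠ v ∧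
    ((Set.Icc (a u) (b u) ×ˢ Set.Icc (c u) (d u)) ∩
      (Set.Icc (a v) (b v) ×ˢ Set.Icc (c v) (d v))).Nonempty

namespace IsRectangleIntersectionGraph

variable {G : SimpleGraph V} {a b c d : V → ℝ} (hG : G.IsRectangleIntersectionGraph a b c d)
include hG

theorem adj_iff {u v : V} : G.Adj u v ↔ u ≠ v ∧
    (Set.Icc (a u) (b u) ∩ Set.Icc (a v) (b v)).Nonempty ∧
    (Set.Icc (c u) (d u) ∩ Set.Icc (c v) (d v)).Nonempty := by
  rw [hG, Set.prod_inter_prod, Set.prod_nonempty_iff]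

theorem not_adj_of_lt {u v : V} (h : b u < a v) : ¬ G.Adj u v := fun huv =>
  let ⟨_, ⟨_, hxu, hxv⟩, _⟩ := hG.adj_iff.mp huv
  (hxv.1.trans hxu.2).not_gt h

theorem not_adj_of_not_nonempty {u : V} (h : ¬ (a u ≤ b u ∧ c u ≤ d u)) (v : V) :
    ¬ G.Adj u v := fun huv =>
  let ⟨_, ⟨_, hxu, _⟩, ⟨_, hyu, _⟩⟩ := hG.adj_iff.mp huv
  h ⟨hxu.1.trans hxu.2, hyu.1.trans hyu.2⟩

theorem adj_iff_of_mem_Icc {u v : V} {t : ℝ} (hu : t ∈ Set.Icc (a u) (b u))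
    (hv : t ∈ Set.Icc (a v) (b v)) :
    G.Adj u v ↔ u ≠ v ∧ (Set.Icc (c u) (d u) ∩ Set.Icc (c v) (d v)).Nonempty := by
  rw [hG.adj_iff]
  exact ⟨fun ⟨hne, _, hy⟩ => ⟨hne, hy⟩, fun ⟨hne, hy⟩ => ⟨hne, ⟨t, hu, hv⟩, hy⟩⟩

theorem cliqueCoverable {S : Finset V} {k : ℕ} (hS : ∀ v ∈ S, a v ≤ b v ∧ c v ≤ d v)
    (hk : G.IndepBounded S k) : G.CliqueCoverable S (cliqueCoverBound k) := by
  classical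
  induction k using Nat.strong_induction_on generalizing S with
  | _ k ih =>
  rcases Nat.eq_zero_or_pos k with rfl | hk0
  · rw [hk.eq_empty]
    exact (cliqueCoverable_card G ∅).mono subset_rfl (by simp)
  rcases indepBounded_pred_or_exists G S ((k + 1) / 2) with hsmall | hlarge
  · exact (ih _ (by omega) hS hsmall).mono subset_rfl (cliqueCoverBound_mono (by omega))
  obtain ⟨t, s₀, hs₀S, hs₀, hs₀card, hs₀t, hL⟩ := exists_threshold b (by omega) hlarge
  rw [show (k + 1) / 2 - 1 = (k - 1) / 2 by omega] at hL
  set L := S.filter (b · < t)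
  set M := S.filter fun v => a v ≤ t ∧ t ≤ b v
  set R := S.filter (t < a ·)
  have hR : G.IndepBounded R (k / 2) := by
    have hdisj : Disjoint s₀ R := Finset.disjoint_left.mpr fun x hx hxR =>
      (Finset.mem_filter.mp hxR).2.not_ge ((hS x (hs₀S hx)).1.trans (hs₀t x hx))
    have := hk.of_not_adj hs₀S hs₀ (Finset.filter_subset _ S) hdisj fun x hx y hy =>
      hG.not_adj_of_lt ((hs₀t x hx).trans_lt (Finset.mem_filter.mp hy).2)
    rwa [hs₀card, show k - (k + 1) / 2 = k / 2 by omega] at this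
  have hM : G.CliqueCoverable M k := by
    refine cliqueCoverable_of_intervals c d (fun v hv => (hS v (Finset.filter_subset _ S hv)).2)
      (fun u hu v hv => hG.adj_iff_of_mem_Icc (t := t) ?_ ?_)
      (hk.mono (Finset.filter_subset _ S))
    exacts [(Finset.mem_filter.mp hu).2, (Finset.mem_filter.mp hv).2]
  have hcover : S ⊆ L ∪ R ∪ M := fun v hv => by
    simp only [L, M, R, Finset.mem_union, Finset.mem_filter]
    grind
  exact (((ih _ (by omega) (fun v hv => hS v (Finset.filter_subset _ S hv)) hL).union
    (ih _ (by omega) (fun v hv => hS v (Finset.filter_subset _ S hv)) hR)).union hM).mono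
    hcover (cliqueCoverBound_halves_add_le k)

/-- Empty rectangles are isolated vertices; each gets a clique of its own. -/
theorem cliqueCoverNum_le [Fintype V] :
    cliqueCoverNum G ≤ cliqueCoverBound (_root_.indepNum G) := by
  classical
  set N := Finset.univ.filter fun v => a v ≤ b v ∧ c v ≤ d v
  set E := Finset.univ.filter fun v => ¬ (a v ≤ b v ∧ c v ≤ d v)
  have hE : G.IsIndepFinset E := fun x hx y _ _ =>
    hG.not_adj_of_not_nonempty (Finset.mem_filter.mp hx).2 y
  have hN : G.IndepBounded N (_root_.indepNum G - E.card) :=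
    (indepBounded_indepNum _).of_not_adj (Finset.subset_univ E) hE (Finset.subset_univ N)
      (Finset.disjoint_filter_filter_not _ _ _).symm
      fun x hx y _ => hG.not_adj_of_not_nonempty (Finset.mem_filter.mp hx).2 y
  have hEcard : E.card ≤ _root_.indepNum G := card_le_indepNum hE
  refine SimpleGraph.cliqueCoverNum_le <|
    ((hG.cliqueCoverable (fun v hv => (Finset.mem_filter.mp hv).2) hN).union
      (cliqueCoverable_card G E)).mono (Finset.filter_union_filter_not_eq _ _).ge ?_
  calc cliqueCoverBound (_root_.indepNum G - E.card) + E.card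
      ≤ cliqueCoverBound (_root_.indepNum G - E.card + E.card) := cliqueCoverBound_add_le _ _
    _ = cliqueCoverBound (_root_.indepNum G) := by rw [Nat.sub_add_cancel hEcard]

end IsRectangleIntersectionGraph

end SimpleGraph

theorem rectangle_clique_cover_bound (n : ℕ) (a b c d : Fin n → ℝ)
    (G : SimpleGraph (Fin n))
    (hG : ∀ u v : Fin n, G.Adj u v ↔ u ≠ v ∧
      ((Set.Icc (a u) (b u) ×ˢ Set.Icc (c u) (d u)) ∩
        (Set.Icc (a v) (b v) ×ˢ Set.Icc (c v) (d v))).Nonempty) :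
    (cliqueCoverNum G : ℝ) ≤
      2 * (_root_.indepNum G : ℝ) * (Real.logb 2 (_root_.indepNum G : ℝ) + 1) :=
  (Nat.cast_le.mpr (IsRectangleIntersectionGraph.cliqueCoverNum_le hG)).trans
    (cliqueCoverBound_le _)
end

section
/- Let G be the intersection graph of a finite family of axis-parallel boxes in R^t, t ≥ 2. Then β(G) = O(α(G)·(log₂ α(G))^{t-1}); precisely, β(G) ≤ 2^{t-1}·α(G)·(log₂(α(G)) + 1)^{t-1}. -/
open SimpleGraph

/-!
Sweep along the last coordinate: let `p` be the smallest right endpoint such that the boxes ending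
at or before `p` contain more than `α/2` independent boxes. Then the boxes ending before `p` and the
boxes starting after `p` have independence numbers at most `α/2` each and less than `α` together,
since no box of the second kind meets a box ending by `p`. The boxes whose last interval contains
`p` intersect exactly when their projections to the first `t - 1` coordinates do. Covering these by
induction on the dimension and the two sides by induction on `α` gives
`β ≤ α (⌊log₂ α⌋ + 1)^(t-1)`; in dimension one this is `β ≤ α` for interval graphs. Empty boxes are
isolated vertices, covered by singletons.
-/

open Finset

variable {V : Type*}

open Classical in
noncomputable def indepOn (G : SimpleGraph V) (s : Finset V) : ℕ :=
  {t ∈ s.powerset | G.IsIndepFinset t}.sup Finset.card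

def SimpleGraph.IsCliqueCoverOn (G : SimpleGraph V) (s : Finset V) (C : Finset (Finset V)) :
    Prop :=
  (∀ c ∈ C, c ⊆ s ∧ G.IsClique (c : Set V)) ∧ ∀ v ∈ s, ∃ c ∈ C, v ∈ c

noncomputable def cliqueCoverOn (G : SimpleGraph V) (s : Finset V) : ℕ :=
  sInf {n | ∃ C : Finset (Finset V), G.IsCliqueCoverOn s C ∧ C.card = n}

section indepOn

variable {G H : SimpleGraph V} {s t : Finset V}

lemma le_indepOn (hts : t ⊆ s) (ht : G.IsIndepFinset t) : t.card ≤ indepOn G s := by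
  classical
  exact le_sup (f := Finset.card) (mem_filter.2 ⟨mem_powerset.2 hts, by convert ht⟩)

lemma exists_indepOn (G : SimpleGraph V) (s : Finset V) :
    ∃ t ⊆ s, G.IsIndepFinset t ∧ t.card = indepOn G s := by
  classical
  obtain ⟨t, ht, hcard⟩ := exists_mem_eq_sup {t ∈ s.powerset | G.IsIndepFinset t}
    ⟨∅, mem_filter.2 ⟨empty_mem_powerset s, by simp [SimpleGraph.IsIndepFinset]⟩⟩ Finset.card
  rw [mem_filter, mem_powerset] at ht
  exact ⟨t, ht.1, ht.2, by rw [indepOn, hcard]⟩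

lemma indepOn_mono (hst : s ⊆ t) : indepOn G s ≤ indepOn G t := by
  obtain ⟨u, hus, hu, hcard⟩ := exists_indepOn G s
  exact hcard ▸ le_indepOn (hus.trans hst) hu

lemma indepOn_empty : indepOn G ∅ = 0 := by
  simp [indepOn]

lemma indepOn_pos (hs : s.Nonempty) : 0 < indepOn G s := by
  obtain ⟨v, hv⟩ := hs
  exact le_indepOn (G := G) (singleton_subset_iff.2 hv)
    (by simp [SimpleGraph.IsIndepFinset])

lemma indepOn_congr (h : ∀ u ∈ s, ∀ v ∈ s, G.Adj u v ↔ H.Adj u v) :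
    indepOn G s = indepOn H s := by
  classical
  unfold indepOn
  congr 1
  refine filter_congr fun t ht => ?_
  have hts : ∀ {x}, x ∈ (t : Set V) → x ∈ s := fun hx => mem_powerset.1 ht hx
  exact ⟨fun hG x hx y hy hxy hH => hG hx hy hxy ((h x (hts hx) y (hts hy)).2 hH),
    fun hH x hx y hy hxy hG => hH hx hy hxy ((h x (hts hx) y (hts hy)).1 hG)⟩

lemma indepOn_add_indepOn_le [DecidableEq V] (hst : Disjoint s t)
    (h : ∀ u ∈ s, ∀ v ∈ t, ¬ G.Adj u v) : indepOn G s + indepOn G t ≤ indepOn G (s ∪ t) := by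
  obtain ⟨I, hIs, hI, hIcard⟩ := exists_indepOn G s
  obtain ⟨J, hJt, hJ, hJcard⟩ := exists_indepOn G t
  have hIJ : G.IsIndepFinset (I ∪ J) := by
    intro x hx y hy hxy
    simp only [coe_union, Set.mem_union, mem_coe] at hx hy
    rcases hx with hx | hx <;> rcases hy with hy | hy
    · exact hI hx hy hxy
    · exact h x (hIs hx) y (hJt hy)
    · exact fun hyx => h y (hIs hy) x (hJt hx) hyx.symm
    · exact hJ hx hy hxy
  rw [← hIcard, ← hJcard, ← card_union_of_disjoint (hst.mono hIs hJt)]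
  exact le_indepOn (union_subset_union hIs hJt) hIJ

end indepOn

section cliqueCoverOn

variable {G H : SimpleGraph V} {s t : Finset V} {C : Finset (Finset V)}

lemma isCliqueCoverOn_map_singleton (G : SimpleGraph V) (s : Finset V) :
    G.IsCliqueCoverOn s (s.map ⟨singleton, singleton_injective⟩) :=
  ⟨by simp, fun v hv => ⟨{v}, mem_map_of_mem _ hv, mem_singleton_self v⟩⟩

lemma cliqueCoverOn_le (hC : G.IsCliqueCoverOn s C) : cliqueCoverOn G s ≤ C.card :=
  Nat.sInf_le ⟨C, hC, rfl⟩

lemma cliqueCoverOn_le_card : cliqueCoverOn G s ≤ s.card :=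
  (cliqueCoverOn_le (isCliqueCoverOn_map_singleton G s)).trans_eq (card_map _)

lemma exists_isCliqueCoverOn (G : SimpleGraph V) (s : Finset V) :
    ∃ C, G.IsCliqueCoverOn s C ∧ C.card = cliqueCoverOn G s :=
  Nat.sInf_mem (s := {n | ∃ C, G.IsCliqueCoverOn s C ∧ C.card = n})
    ⟨_, _, isCliqueCoverOn_map_singleton G s, rfl⟩

lemma cliqueCoverOn_empty : cliqueCoverOn G ∅ = 0 :=
  Nat.le_zero.1 <| (cliqueCoverOn_le (C := ∅) ⟨by simp, by simp⟩).trans_eq card_empty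

lemma cliqueCoverOn_le_one (hs : G.IsClique (s : Set V)) : cliqueCoverOn G s ≤ 1 :=
  (cliqueCoverOn_le (C := {s})
    ⟨by simpa using hs, fun v hv => ⟨s, mem_singleton_self s, hv⟩⟩).trans_eq (card_singleton s)

lemma cliqueCoverOn_union_le [DecidableEq V] :
    cliqueCoverOn G (s ∪ t) ≤ cliqueCoverOn G s + cliqueCoverOn G t := by
  obtain ⟨C, ⟨hCc, hCs⟩, hC⟩ := exists_isCliqueCoverOn G s
  obtain ⟨D, ⟨hDc, hDt⟩, hD⟩ := exists_isCliqueCoverOn G t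
  rw [← hC, ← hD]
  refine (cliqueCoverOn_le ⟨fun c hc => ?_, fun v hv => ?_⟩).trans (card_union_le C D)
  · rcases mem_union.1 hc with hc | hc
    · exact ⟨(hCc c hc).1.trans subset_union_left, (hCc c hc).2⟩
    · exact ⟨(hDc c hc).1.trans subset_union_right, (hDc c hc).2⟩
  · rcases mem_union.1 hv with hv | hv
    · obtain ⟨c, hc, hvc⟩ := hCs v hv
      exact ⟨c, mem_union_left D hc, hvc⟩
    · obtain ⟨c, hc, hvc⟩ := hDt v hv
      exact ⟨c, mem_union_right C hc, hvc⟩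

lemma cliqueCoverOn_mono [DecidableEq V] (hst : s ⊆ t) :
    cliqueCoverOn G s ≤ cliqueCoverOn G t := by
  obtain ⟨C, ⟨hCc, hCt⟩, hC⟩ := exists_isCliqueCoverOn G t
  rw [← hC]
  refine (cliqueCoverOn_le (C := C.image (· ∩ s)) ⟨?_, fun v hv => ?_⟩).trans card_image_le
  · simp only [mem_image, forall_exists_index, and_imp, forall_apply_eq_imp_iff₂]
    exact fun c hc => ⟨inter_subset_right, (hCc c hc).2.subset (by simp)⟩
  · obtain ⟨c, hc, hvc⟩ := hCt v (hst hv)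
    exact ⟨c ∩ s, mem_image_of_mem _ hc, mem_inter.2 ⟨hvc, hv⟩⟩

lemma cliqueCoverOn_congr (h : ∀ u ∈ s, ∀ v ∈ s, G.Adj u v ↔ H.Adj u v) :
    cliqueCoverOn G s = cliqueCoverOn H s := by
  have hcover : ∀ C, G.IsCliqueCoverOn s C ↔ H.IsCliqueCoverOn s C := fun C =>
    and_congr_left' <| forall₂_congr fun c _ => and_congr_right fun hcs =>
      ⟨fun hG x hx y hy hxy => (h x (hcs hx) y (hcs hy)).1 (hG hx hy hxy),
        fun hH x hx y hy hxy => (h x (hcs hx) y (hcs hy)).2 (hH hx hy hxy)⟩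
  simp only [cliqueCoverOn, hcover]

lemma cliqueCoverNum_le_cliqueCoverOn_univ [Fintype V] (G : SimpleGraph V) :
    cliqueCoverNum G ≤ cliqueCoverOn G univ := by
  obtain ⟨C, ⟨hCc, hCs⟩, hcard⟩ := exists_isCliqueCoverOn G univ
  exact hcard ▸ Nat.sInf_le ⟨C, ⟨fun c hc => (hCc c hc).2, fun v => hCs v (mem_univ v)⟩, rfl⟩

lemma indepOn_univ_le_indepNum [Fintype V] (G : SimpleGraph V) :
    indepOn G univ ≤ _root_.indepNum G := by
  obtain ⟨t, -, ht, hcard⟩ := exists_indepOn G univ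
  exact hcard ▸ le_csSup ⟨Fintype.card V, fun n ⟨u, _, hu⟩ => hu ▸ card_le_univ u⟩ ⟨t, ht, rfl⟩

end cliqueCoverOn

/-- `boxCoverBound t α` bounds the clique cover number of an intersection graph of nonempty boxes
in `ℝ^t` with independence number `α`; in dimension `0` all boxes are the same point. -/
def boxCoverBound : ℕ → ℕ → ℕ
  | 0, _ => 1
  | k + 1, α => α * (Nat.log 2 α + 1) ^ k

lemma boxCoverBound_mono (k : ℕ) : Monotone (boxCoverBound k) := by
  intro α β h
  cases k with
  | zero => exact le_rfl
  | succ k => exact Nat.mul_le_mul h (Nat.pow_le_pow_left (by gcongr) k)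

lemma add_boxCoverBound_le (k x y : ℕ) :
    x + boxCoverBound (k + 1) y ≤ boxCoverBound (k + 1) (x + y) := by
  have hone : 1 ≤ (Nat.log 2 (x + y) + 1) ^ k := Nat.one_le_pow _ _ (Nat.succ_pos _)
  simp only [boxCoverBound, add_mul]
  gcongr
  · exact Nat.le_mul_of_pos_right x hone
  · omega

lemma mul_log_succ_pow_le {α y : ℕ} (m : ℕ) (h : 2 * y ≤ α) :
    y * (Nat.log 2 y + 1) ^ m ≤ y * Nat.log 2 α ^ m := by
  rcases Nat.eq_zero_or_pos y with rfl | hy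
  · simp
  have hlog : Nat.log 2 y + 1 ≤ Nat.log 2 α := by
    rw [← Nat.log_mul_base one_lt_two hy.ne', mul_comm]
    exact Nat.log_mono_right h
  gcongr

lemma boxCoverBound_step {k α αS αL αR : ℕ} (hS : αS ≤ α) (hL : 2 * αL ≤ α) (hR : 2 * αR ≤ α)
    (hLR : αL + αR < α) :
    boxCoverBound k αS + boxCoverBound (k + 1) αL + boxCoverBound (k + 1) αR ≤
      boxCoverBound (k + 1) α := by
  cases k with
  | zero => simp only [boxCoverBound, pow_zero, mul_one]; omega
  | succ k =>
    set x := Nat.log 2 α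
    have hpow : x ^ (k + 1) + (x + 1) ^ k ≤ (x + 1) ^ (k + 1) := by
      rw [pow_succ', pow_succ' (x + 1), add_mul, one_mul]
      gcongr; omega
    calc boxCoverBound (k + 1) αS + boxCoverBound (k + 2) αL + boxCoverBound (k + 2) αR
        ≤ α * (x + 1) ^ k + αL * x ^ (k + 1) + αR * x ^ (k + 1) :=
          add_le_add_three (boxCoverBound_mono _ hS) (mul_log_succ_pow_le _ hL)
            (mul_log_succ_pow_le _ hR)
      _ ≤ α * (x + 1) ^ k + α * x ^ (k + 1) := by
          rw [add_assoc, ← add_mul]; gcongr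
      _ ≤ α * (x + 1) ^ (k + 1) := by rw [← mul_add, add_comm]; gcongr

lemma exists_balanced_pivot (G : SimpleGraph V) (a b : V → ℝ) (hG : ∀ u v, G.Adj u v → a u ≤ b v)
    {s : Finset V} (hab : ∀ v ∈ s, a v ≤ b v) (hs : s.Nonempty) :
    ∃ p : ℝ, 2 * indepOn G {v ∈ s | b v < p} ≤ indepOn G s ∧
      2 * indepOn G {v ∈ s | p < a v} ≤ indepOn G s ∧
      indepOn G {v ∈ s | b v < p} + indepOn G {v ∈ s | p < a v} < indepOn G s := by
  classical
  set α := indepOn G s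
  have hα : 0 < α := indepOn_pos hs
  set Q := {w ∈ s | α / 2 < indepOn G {v ∈ s | b v ≤ b w}}
  have hQ : Q.Nonempty := by
    obtain ⟨w, hw, hmax⟩ := s.exists_max_image b hs
    refine ⟨w, mem_filter.2 ⟨hw, ?_⟩⟩
    rw [filter_true_of_mem hmax]
    omega
  obtain ⟨w, hwQ, hmin⟩ := Q.exists_min_image b hQ
  refine ⟨b w, ?_⟩
  have hL : indepOn G {v ∈ s | b v < b w} ≤ α / 2 := by
    rcases {v ∈ s | b v < b w}.eq_empty_or_nonempty with hL | hL
    · rw [hL, indepOn_empty]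
      exact Nat.zero_le _
    obtain ⟨w', hw', hmax⟩ := exists_max_image _ b hL
    have hw's := mem_filter.1 hw'
    have hw'Q : w' ∉ Q := fun h => (hmin w' h).not_gt hw's.2
    have hsub : {v ∈ s | b v < b w} ⊆ {v ∈ s | b v ≤ b w'} :=
      fun v hv => mem_filter.2 ⟨(mem_filter.1 hv).1, hmax v hv⟩
    simp only [Q, mem_filter, hw's.1, true_and, not_lt] at hw'Q
    exact (indepOn_mono hsub).trans hw'Q
  have hR : indepOn G {v ∈ s | b w < a v} + indepOn G {v ∈ s | b v ≤ b w} ≤ α := by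
    refine (indepOn_add_indepOn_le ?_ ?_).trans (indepOn_mono (union_subset ?_ ?_))
    · exact disjoint_filter.2 fun v hv hav hbv => ((hav.trans_le (hab v hv)).trans_le hbv).false
    · exact fun u hu v hv huv =>
        ((mem_filter.1 hu).2.trans_le ((hG u v huv).trans (mem_filter.1 hv).2)).false
    · exact filter_subset _ _
    · exact filter_subset _ _
  have hp : α / 2 < indepOn G {v ∈ s | b v ≤ b w} := (mem_filter.1 hwQ).2
  omega

def boxGraph {ι : Type*} (a b : V → ι → ℝ) : SimpleGraph V where
  Adj u v := u ≠ v ∧ ∀ i, (Set.Icc (a u i) (b u i) ∩ Set.Icc (a v i) (b v i)).Nonempty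
  symm := ⟨fun _ _ h => ⟨h.1.symm, fun i => by rw [Set.inter_comm]; exact h.2 i⟩⟩
  loopless := ⟨fun _ h => h.1 rfl⟩

section boxGraph

variable {ι : Type*} {a b : V → ι → ℝ} {u v : V}

lemma boxGraph_adj :
    (boxGraph a b).Adj u v ↔
      u ≠ v ∧ ∀ i, (Set.Icc (a u i) (b u i) ∩ Set.Icc (a v i) (b v i)).Nonempty :=
  Iff.rfl

lemma le_of_boxGraph_adj (h : (boxGraph a b).Adj u v) (i : ι) : a u i ≤ b v i := by
  obtain ⟨x, ⟨hux, -⟩, -, hxv⟩ := h.2 i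
  exact hux.trans hxv

lemma le_self_of_boxGraph_adj (h : (boxGraph a b).Adj u v) (i : ι) : a u i ≤ b u i := by
  obtain ⟨x, ⟨hux, hxu⟩, -⟩ := h.2 i
  exact hux.trans hxu

lemma boxGraph_adj_iff_castSucc {k : ℕ} {a b : V → Fin (k + 1) → ℝ} {p : ℝ}
    (hu : p ∈ Set.Icc (a u (Fin.last k)) (b u (Fin.last k)))
    (hv : p ∈ Set.Icc (a v (Fin.last k)) (b v (Fin.last k))) :
    (boxGraph a b).Adj u v ↔
      (boxGraph (fun w (i : Fin k) => a w i.castSucc) (fun w i => b w i.castSucc)).Adj u v := by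
  simp only [boxGraph_adj, Fin.forall_fin_succ' (n := k)]
  exact ⟨fun h => ⟨h.1, h.2.1⟩, fun h => ⟨h.1, h.2, p, hu, hv⟩⟩

end boxGraph

theorem cliqueCoverOn_boxGraph_le_of_forall_le [DecidableEq V] (k : ℕ)
    (a b : V → Fin k → ℝ) (s : Finset V) (hab : ∀ v ∈ s, ∀ i, a v i ≤ b v i) :
    cliqueCoverOn (boxGraph a b) s ≤ boxCoverBound k (indepOn (boxGraph a b) s) := by
  induction k generalizing s with
  | zero => exact cliqueCoverOn_le_one fun u _ v _ huv => ⟨huv, finZeroElim⟩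
  | succ k ihk =>
    set G := boxGraph a b
    induction hα : indepOn G s using Nat.strong_induction_on generalizing s with
    | _ α ih =>
    rcases s.eq_empty_or_nonempty with rfl | hs
    · simp [cliqueCoverOn_empty]
    obtain ⟨p, hL, hR, hLR⟩ := exists_balanced_pivot G (a · (Fin.last k)) (b · (Fin.last k))
      (fun u v h => le_of_boxGraph_adj h _) (fun v hv => hab v hv _) hs
    set L := {v ∈ s | b v (Fin.last k) < p}
    set R := {v ∈ s | p < a v (Fin.last k)}
    set S := {v ∈ s | p ∈ Set.Icc (a v (Fin.last k)) (b v (Fin.last k))}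
    have hsLRS : s ⊆ L ∪ R ∪ S := by
      intro v hv
      simp only [L, R, S, mem_union, mem_filter, hv, true_and, Set.mem_Icc]
      grind
    have hS : cliqueCoverOn G S ≤ boxCoverBound k (indepOn G s) := by
      have hagree : ∀ u ∈ S, ∀ v ∈ S, G.Adj u v ↔ _ := fun u hu v hv =>
        boxGraph_adj_iff_castSucc (mem_filter.1 hu).2 (mem_filter.1 hv).2
      rw [cliqueCoverOn_congr hagree]
      refine (ihk _ _ S fun v hv i => hab v (mem_filter.1 hv).1 _).trans
        (boxCoverBound_mono k ?_)
      rw [← indepOn_congr hagree]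
      exact indepOn_mono (filter_subset _ _)
    have hLb := ih _ (by omega) L (fun v hv => hab v (mem_filter.1 hv).1) rfl
    have hRb := ih _ (by omega) R (fun v hv => hab v (mem_filter.1 hv).1) rfl
    rw [← hα]
    calc cliqueCoverOn G s ≤ cliqueCoverOn G (L ∪ R ∪ S) := cliqueCoverOn_mono hsLRS
      _ ≤ cliqueCoverOn G L + cliqueCoverOn G R + cliqueCoverOn G S :=
          cliqueCoverOn_union_le.trans (Nat.add_le_add_right cliqueCoverOn_union_le _)
      _ ≤ boxCoverBound k (indepOn G s) + boxCoverBound (k + 1) (indepOn G L) +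
            boxCoverBound (k + 1) (indepOn G R) := by omega
      _ ≤ boxCoverBound (k + 1) (indepOn G s) := boxCoverBound_step le_rfl hL hR hLR

theorem cliqueCoverOn_boxGraph_le [DecidableEq V] (k : ℕ) (a b : V → Fin (k + 1) → ℝ)
    (s : Finset V) :
    cliqueCoverOn (boxGraph a b) s ≤ boxCoverBound (k + 1) (indepOn (boxGraph a b) s) := by
  set G := boxGraph a b
  set N := {v ∈ s | ∀ i, a v i ≤ b v i}
  set D := {v ∈ s | ¬ ∀ i, a v i ≤ b v i}
  have hD : ∀ u ∈ D, ∀ v, ¬ G.Adj u v := fun u hu v huv =>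
    (mem_filter.1 hu).2 (le_self_of_boxGraph_adj huv)
  have hDN : indepOn G D + indepOn G N ≤ indepOn G s := by
    rw [← filter_union_filter_not_eq (fun v => ∀ i, a v i ≤ b v i) s, union_comm]
    exact indepOn_add_indepOn_le (disjoint_filter_filter_not _ _ _).symm
      fun u hu v _ => hD u hu v
  calc cliqueCoverOn G s = cliqueCoverOn G (D ∪ N) := by
        rw [union_comm, filter_union_filter_not_eq]
    _ ≤ cliqueCoverOn G D + cliqueCoverOn G N := cliqueCoverOn_union_le
    _ ≤ indepOn G D + boxCoverBound (k + 1) (indepOn G N) := by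
        refine Nat.add_le_add (cliqueCoverOn_le_card.trans (le_indepOn subset_rfl ?_))
          (cliqueCoverOn_boxGraph_le_of_forall_le _ a b N fun v hv => (mem_filter.1 hv).2)
        exact fun u hu v _ _ => hD u hu v
    _ ≤ boxCoverBound (k + 1) (indepOn G D + indepOn G N) := add_boxCoverBound_le _ _ _
    _ ≤ boxCoverBound (k + 1) (indepOn G s) := boxCoverBound_mono _ hDN

theorem box_clique_cover_bound (t n : ℕ) (ht : 2 ≤ t)
    (a b : Fin n → Fin t → ℝ) (G : SimpleGraph (Fin n))
    (hG : ∀ u v : Fin n, G.Adj u v ↔ u ≠ v ∧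
      (Set.pi Set.univ (fun i => Set.Icc (a u i) (b u i)) ∩
        Set.pi Set.univ (fun i => Set.Icc (a v i) (b v i))).Nonempty) :
    (cliqueCoverNum G : ℝ) ≤
      2 ^ (t - 1) * (_root_.indepNum G : ℝ) * (Real.logb 2 (_root_.indepNum G : ℝ) + 1) ^ (t - 1) := by
  obtain ⟨k, rfl⟩ : ∃ k, t = k + 1 := ⟨t - 1, by omega⟩
  obtain rfl : G = boxGraph a b := by
    ext u v
    rw [hG, boxGraph_adj, ← Set.pi_inter_distrib, Set.univ_pi_nonempty_iff]
  set α := _root_.indepNum (boxGraph a b)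
  have hβ : cliqueCoverNum (boxGraph a b) ≤ α * (Nat.log 2 α + 1) ^ k :=
    (cliqueCoverNum_le_cliqueCoverOn_univ _).trans <|
      (cliqueCoverOn_boxGraph_le k a b univ).trans <|
        boxCoverBound_mono _ (indepOn_univ_le_indepNum _)
  have hlog : (Nat.log 2 α : ℝ) ≤ Real.logb 2 α := Real.natLog_le_logb α 2
  have hlog_nonneg : 0 ≤ Real.logb 2 α + 1 := by linarith [(Nat.log 2 α).cast_nonneg (α := ℝ)]
  calc (cliqueCoverNum (boxGraph a b) : ℝ) ≤ α * (Nat.log 2 α + 1) ^ k := by exact_mod_cast hβ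
    _ ≤ α * (Real.logb 2 α + 1) ^ k := by gcongr
    _ ≤ 2 ^ k * α * (Real.logb 2 α + 1) ^ k := by
        rw [mul_assoc]; exact le_mul_of_one_le_left (by positivity) (one_le_pow₀ one_le_two)
    _ = 2 ^ (k + 1 - 1) * α * (Real.logb 2 α + 1) ^ (k + 1 - 1) := by rw [Nat.add_sub_cancel]
end

section
/- Let G be a graph and H an interval supergraph of G such that V can be partitioned into sets A, B, C where A and B are separated in G, and H[C] is a clique. Then β(G) ≤ β(G[A]) + β(G[B]) + φ(G,H)·α(G[C]), where φ(G,H) = max over W with H[W] a clique of β(G[W])/α(G[W]). -/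
open SimpleGraph

/-! The union of clique covers of `G[A]`, `G[B]`, `G[C]` covers `G`, and since `C` is a clique of
`H` it is one of the sets over which `φ(G,H)` maximises, so `β(G[C]) ≤ φ(G,H) · α(G[C])`. -/

namespace SimpleGraph

variable {V : Type*} (G : SimpleGraph V)

theorem IsCliqueCover.cliqueCoverNum_le {C : Finset (Finset V)} (hC : G.IsCliqueCover C) :
    cliqueCoverNum G ≤ C.card :=
  Nat.sInf_le ⟨C, hC, rfl⟩

theorem isCliqueCover_singletons [Fintype V] [DecidableEq V] :
    G.IsCliqueCover (Finset.univ.image fun v => {v}) := by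
  refine ⟨?_, fun v => ⟨{v}, by simp, Finset.mem_singleton_self v⟩⟩
  simp only [Finset.mem_image, Finset.mem_univ, true_and, forall_exists_index]
  rintro _ v rfl
  simp

theorem exists_isCliqueCover_card_eq_cliqueCoverNum [Finite V] :
    ∃ C : Finset (Finset V), G.IsCliqueCover C ∧ C.card = cliqueCoverNum G := by
  classical
  have := Fintype.ofFinite V
  have hne : {n | ∃ C : Finset (Finset V), G.IsCliqueCover C ∧ C.card = n}.Nonempty :=
    ⟨_, _, G.isCliqueCover_singletons, rfl⟩
  exact Nat.sInf_mem hne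

theorem exists_cliques_covering_card_le_cliqueCoverNum_induce (S : Set V) [Finite S] :
    ∃ F : Finset (Finset V), F.card ≤ cliqueCoverNum (G.induce S) ∧
      (∀ c ∈ F, G.IsClique (c : Set V)) ∧ ∀ v ∈ S, ∃ c ∈ F, v ∈ c := by
  classical
  obtain ⟨D, ⟨hclique, hcover⟩, hcard⟩ :=
    (G.induce S).exists_isCliqueCover_card_eq_cliqueCoverNum
  let lift : Finset S → Finset V := fun c => c.map (Function.Embedding.subtype _)
  refine ⟨D.image lift, hcard ▸ Finset.card_image_le, ?_, fun v hv => ?_⟩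
  · simp only [Finset.mem_image, forall_exists_index, and_imp]
    rintro _ c hc rfl
    simpa [lift] using ((hclique c hc).map (f := Function.Embedding.subtype _)).mono
      (G.map_comap_le _)
  · obtain ⟨c, hc, hvc⟩ := hcover ⟨v, hv⟩
    exact ⟨lift c, Finset.mem_image_of_mem _ hc, Finset.mem_map_of_mem _ hvc⟩

theorem cliqueCoverNum_le_sum_induce [Finite V] {ι : Type*} (s : Finset ι) (S : ι → Set V)
    (hS : ∀ v, ∃ i ∈ s, v ∈ S i) :
    cliqueCoverNum G ≤ ∑ i ∈ s, cliqueCoverNum (G.induce (S i)) := by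
  classical
  choose F hcard hclique hcover using
    fun i => G.exists_cliques_covering_card_le_cliqueCoverNum_induce (S i)
  have hunion : G.IsCliqueCover (s.biUnion F) := by
    refine ⟨fun c hc => ?_, fun v => ?_⟩
    · obtain ⟨i, -, hc⟩ := Finset.mem_biUnion.mp hc
      exact hclique i c hc
    · obtain ⟨i, hi, hv⟩ := hS v
      obtain ⟨c, hc, hvc⟩ := hcover i v hv
      exact ⟨c, Finset.mem_biUnion.mpr ⟨i, hi, hc⟩, hvc⟩
  calc cliqueCoverNum G ≤ (s.biUnion F).card := hunion.cliqueCoverNum_le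
    _ ≤ ∑ i ∈ s, (F i).card := Finset.card_biUnion_le
    _ ≤ ∑ i ∈ s, cliqueCoverNum (G.induce (S i)) := Finset.sum_le_sum fun i _ => hcard i

theorem cliqueCoverNum_eq_zero_of_isEmpty [IsEmpty V] : cliqueCoverNum G = 0 :=
  Nat.eq_zero_of_le_zero
    (IsCliqueCover.cliqueCoverNum_le G (C := ∅) ⟨by simp, fun v => isEmptyElim v⟩)

theorem indepNum_pos [Finite V] [Nonempty V] : 0 < _root_.indepNum G := by
  classical
  have := Fintype.ofFinite V
  obtain ⟨v⟩ := ‹Nonempty V›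
  have hbdd : BddAbove {n | ∃ s : Finset V, G.IsIndepFinset s ∧ s.card = n} :=
    ⟨Fintype.card V, by rintro _ ⟨s, -, rfl⟩; exact s.card_le_univ⟩
  exact le_csSup hbdd ⟨{v}, by simp [IsIndepFinset], Finset.card_singleton v⟩

theorem cliqueCoverNum_le_mul_indepNum_of_div_le [Finite V] {r : ℝ}
    (h : (cliqueCoverNum G : ℝ) / _root_.indepNum G ≤ r) :
    (cliqueCoverNum G : ℝ) ≤ r * _root_.indepNum G := by
  -- `α(G) = 0` only for the empty graph, where the junk value `β / 0 = 0` does no harm.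
  rcases Nat.eq_zero_or_pos (_root_.indepNum G) with h0 | hpos
  · have : IsEmpty V := not_nonempty_iff.mp fun _ => G.indepNum_pos.ne' h0
    simp [h0, cliqueCoverNum_eq_zero_of_isEmpty]
  · exact (div_le_iff₀ (Nat.cast_pos.mpr hpos)).mp h

theorem div_le_phi [Finite V] (H : SimpleGraph V) {W : Set V} (hW : H.IsClique W) :
    (cliqueCoverNum (G.induce W) : ℝ) / _root_.indepNum (G.induce W) ≤ phi G H := by
  refine le_csSup ((Set.finite_range fun W : Finset V => (cliqueCoverNum (G.induce W) : ℝ) /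
    _root_.indepNum (G.induce W)).subset ?_).bddAbove
    ⟨W.toFinite.toFinset, by simpa using hW, by rw [Set.Finite.coe_toFinset]⟩
  rintro _ ⟨W, -, rfl⟩
  exact ⟨W, rfl⟩

end SimpleGraph

theorem clique_cover_partition_bound_general {V : Type*} [Fintype V]
    (G H : SimpleGraph V) (A B C : Set V)
    (hcover : A ∪ B ∪ C = Set.univ)
    (hC : H.IsClique C) :
    (cliqueCoverNum G : ℝ) ≤
      (cliqueCoverNum (G.induce A) : ℝ) + (cliqueCoverNum (G.induce B) : ℝ) +
        phi G H * (_root_.indepNum (G.induce C) : ℝ) := by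
  have hmem (v : V) : ∃ i ∈ Finset.univ, v ∈ ![A, B, C] i := by
    have hv : v ∈ A ∪ B ∪ C := hcover ▸ Set.mem_univ v
    simpa [Fin.exists_fin_succ, or_assoc] using hv
  have hunion : cliqueCoverNum G ≤ cliqueCoverNum (G.induce A) + cliqueCoverNum (G.induce B) +
      cliqueCoverNum (G.induce C) := by
    simpa [Fin.sum_univ_three, add_assoc] using
      G.cliqueCoverNum_le_sum_induce Finset.univ ![A, B, C] hmem
  have hphi := (G.induce C).cliqueCoverNum_le_mul_indepNum_of_div_le (G.div_le_phi H hC)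
  calc (cliqueCoverNum G : ℝ)
      ≤ cliqueCoverNum (G.induce A) + cliqueCoverNum (G.induce B) +
          cliqueCoverNum (G.induce C) := by exact_mod_cast hunion
    _ ≤ _ := by gcongr

theorem clique_cover_partition_bound {V : Type*} [Fintype V]
    (G H : SimpleGraph V) (hle : G ≤ H) (A B C : Set V)
    (hAB : Disjoint A B) (hAC : Disjoint A C) (hBC : Disjoint B C)
    (hcover : A ∪ B ∪ C = Set.univ)
    (hsep : ∀ a ∈ A, ∀ b ∈ B, ¬ G.Adj a b)
    (hC : H.IsClique C) :
    (cliqueCoverNum G : ℝ) ≤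
      (cliqueCoverNum (G.induce A) : ℝ) + (cliqueCoverNum (G.induce B) : ℝ) +
        phi G H * (_root_.indepNum (G.induce C) : ℝ) :=
  clique_cover_partition_bound_general G H A B C hcover hC
end
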